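/- (Recurrence relation for 2D q-Appell polynomials.) Assume a_0 ≠ 0. Then for every n ≥ 1 the following identity of polynomials in x, y holds: [n]_q · A_{n,q}(qx,y) = Σ_{k=1}^{n} [n choose k]_q q^{n−k} (α_k + [k]_q β_{k−1} y) A_{n−k,q}(x,y) + [n]_q q^{n} x · A_{n−1,q}(x,y), where A_{n,q}(qx,y) denotes the polynomial obtained from A_{n,q}(x,y) by substituting qx for x. -/

import Mathlib

noncomputable section

open Finset MvPolynomial

/-- The `q`-integer `[n]_q = 1 + q + ⋯ + q^(n-1)`. -/
def qInt {K : Type*} [Field K] (q : K) (n : ℕ) : K := ∑ i ∈ Finset.range n, q ^ i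

/-- The `q`-factorial `[n]_q! = [1]_q [2]_q ⋯ [n]_q`. -/
def qFact {K : Type*} [Field K] (q : K) (n : ℕ) : K := ∏ k ∈ Finset.range n, qInt q (k + 1)

/-- The `q`-binomial coefficient `[n choose k]_q`. -/
def qChoose {K : Type*} [Field K] (q : K) (n k : ℕ) : K :=
  qFact q n / (qFact q k * qFact q (n - k))

/-- The partial `q`-derivative in the variable `v` (v = 0 is `x`, v = 1 is `y`),
the linear operator determined by `D_{q,x}(x^m y^l) = [m]_q x^(m-1) y^l` and
`D_{q,y}(x^m y^l) = [l]_q x^m y^(l-1)`. -/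
def qDeriv {K : Type*} [Field K] (q : K) (v : Fin 2) (P : MvPolynomial (Fin 2) K) :
    MvPolynomial (Fin 2) K :=
  ∑ m ∈ P.support, monomial (m - Finsupp.single v 1) (P.coeff m * qInt q (m v))

/-- Substitution `x ↦ c·x` in a polynomial in the two variables `x = X 0`, `y = X 1`. -/
def substX {K : Type*} [Field K] (c : K) (P : MvPolynomial (Fin 2) K) :
    MvPolynomial (Fin 2) K :=
  aeval (fun i : Fin 2 => if i = 0 then C c * X 0 else X 1) P

/-- Substitution `y ↦ c·y` in a polynomial in the two variables `x = X 0`, `y = X 1`. -/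
def substY {K : Type*} [Field K] (c : K) (P : MvPolynomial (Fin 2) K) :
    MvPolynomial (Fin 2) K :=
  aeval (fun i : Fin 2 => if i = 0 then X 0 else C c * X 1) P

/-- The 2D `q`-Appell polynomials attached to a coefficient sequence `a`:
`A_{n,q}(x,y) = Σ_{i+j+k=n} ([n]_q!/([i]_q![j]_q![k]_q!)) a_i q^(k(k-1)/2) x^j y^k`. -/
def appell {K : Type*} [Field K] (q : K) (a : ℕ → K) (n : ℕ) : MvPolynomial (Fin 2) K :=
  ∑ i ∈ Finset.range (n + 1), ∑ j ∈ Finset.range (n + 1 - i),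
    monomial (Finsupp.single (0 : Fin 2) j + Finsupp.single (1 : Fin 2) (n - i - j))
      (qFact q n / (qFact q i * qFact q j * qFact q (n - i - j)) * a i *
        q ^ ((n - i - j) * (n - i - j - 1) / 2))

/-! Compare coefficients of `x^j y^l`. With `m = n - j - l`, that coefficient of `A_{n,q}` is
`[n]_q! · (a_m/[m]_q!) · (1/[j]_q!) · (q^(l(l-1)/2)/[l]_q!)`, so both sums on the right collapse
to the convolutions defining `α` and `β` (for `β` with `γ_k = [k]_q β_(k-1)`, the series of
`γ_k/[k]_q!` being `t` times that of `β_k/[k]_q!`). The three terms on the right then contribute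
`q^(j+l) [m]_q`, `q^j [l]_q` and `q^n [j]_q` times the coefficient, and the recurrence reduces to
`[n]_q = [l]_q + q^l [m]_q + q^(l+m) [j]_q`. -/

section QNumbers
variable {K : Type*} [Field K] (q : K)

@[simp] lemma qInt_zero : qInt q 0 = 0 := by simp [qInt]

@[simp] lemma qFact_zero : qFact q 0 = 1 := by simp [qFact]

lemma qFact_succ (n : ℕ) : qFact q (n + 1) = qFact q n * qInt q (n + 1) :=
  prod_range_succ _ _

lemma qInt_add (m n : ℕ) : qInt q (m + n) = qInt q m + q ^ m * qInt q n := by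
  simp only [qInt, sum_range_add, mul_sum, pow_add]

variable {q}

lemma qFact_ne_zero (hq : ∀ n : ℕ, 1 ≤ n → qInt q n ≠ 0) (n : ℕ) : qFact q n ≠ 0 :=
  prod_ne_zero_iff.2 fun k _ => hq (k + 1) k.succ_pos

lemma qInt_mul_div_qFact_succ (hq : ∀ n : ℕ, 1 ≤ n → qInt q n ≠ 0) (n : ℕ) (x : K) :
    qInt q (n + 1) * (x / qFact q (n + 1)) = x / qFact q n := by
  rw [qFact_succ]
  field_simp [hq (n + 1) n.succ_pos]

lemma mk_div_qFact_pred_eq_mk_qInt_mul (hq : ∀ n : ℕ, 1 ≤ n → qInt q n ≠ 0) (a : ℕ → K) :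
    PowerSeries.mk (fun n => if n = 0 then (0 : K) else a n / qFact q (n - 1)) =
      PowerSeries.mk (fun n => qInt q n * (a n / qFact q n)) := by
  congr 1
  funext n
  rcases n with _ | n
  · simp
  · simp [qInt_mul_div_qFact_succ hq]

end QNumbers

lemma PowerSeries.sum_range_eq_of_mk_eq_mk_mul_mk {R : Type*} [CommSemiring R] {f g h : ℕ → R}
    (H : mk h = mk f * mk g) (n : ℕ) : ∑ k ∈ range (n + 1), f k * g (n - k) = h n := by
  simpa [coeff_mul, Finset.Nat.sum_antidiagonal_eq_sum_range_succ_mk] using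
    (congrArg (coeff n) H).symm

lemma PowerSeries.X_mul_mk {R : Type*} [Semiring R] (f : ℕ → R) :
    X * mk f = mk (fun n => if n = 0 then 0 else f (n - 1)) := by
  ext n
  rcases n with _ | n <;> simp [coeff_succ_X_mul]

lemma Finset.sum_Icc_one_eq_sum_range_of_eq_zero {M : Type*} [AddCommMonoid M] {f : ℕ → M}
    {m n : ℕ} (hmn : m ≤ n) (h0 : f 0 = 0) (hf : ∀ k, m < k → k ≤ n → f k = 0) :
    ∑ k ∈ Icc 1 n, f k = ∑ k ∈ range (m + 1), f k := by
  calc ∑ k ∈ Icc 1 n, f k = ∑ k ∈ range (n + 1), f k := by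
        refine sum_subset (fun k hk => ?_) fun k hk hk' => ?_
        · simp only [mem_Icc, mem_range] at hk ⊢; omega
        · obtain rfl : k = 0 := by simp only [mem_Icc, mem_range] at hk hk'; omega
          exact h0
    _ = ∑ k ∈ range (m + 1), f k := by
        refine (sum_subset (range_subset_range.2 (by omega)) fun k hk hk' => ?_).symm
        simp only [mem_range] at hk hk'
        exact hf k (by omega) (by omega)

def expXY (j l : ℕ) : Fin 2 →₀ ℕ := Finsupp.single 0 j + Finsupp.single 1 l

@[simp] lemma expXY_apply_zero (j l : ℕ) : expXY j l 0 = j := by simp [expXY]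

@[simp] lemma expXY_apply_one (j l : ℕ) : expXY j l 1 = l := by simp [expXY]

lemma expXY_inj {j l j' l' : ℕ} : expXY j l = expXY j' l' ↔ j = j' ∧ l = l' :=
  ⟨fun h => ⟨by simpa using congr($h 0), by simpa using congr($h 1)⟩,
    fun ⟨hj, hl⟩ => hj ▸ hl ▸ rfl⟩

lemma expXY_eta (d : Fin 2 →₀ ℕ) : expXY (d 0) (d 1) = d := by
  ext i; fin_cases i <;> simp

section Coeff
variable {K : Type*} [Field K]

lemma coeff_X_zero_mul (p : MvPolynomial (Fin 2) K) (j l : ℕ) :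
    coeff (expXY j l) (X 0 * p) = if j = 0 then 0 else coeff (expXY (j - 1) l) p := by
  rw [coeff_X_mul']
  rcases j with _ | j
  · simp
  · simp only [Finsupp.mem_support_iff, expXY_apply_zero, ne_eq, Nat.add_one_ne_zero,
      not_false_eq_true, if_true, Nat.add_sub_cancel]
    congr 1
    ext i; fin_cases i <;> simp

lemma coeff_X_one_mul (p : MvPolynomial (Fin 2) K) (j l : ℕ) :
    coeff (expXY j l) (X 1 * p) = if l = 0 then 0 else coeff (expXY j (l - 1)) p := by
  rw [coeff_X_mul']
  rcases l with _ | l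
  · simp
  · simp only [Finsupp.mem_support_iff, expXY_apply_one, ne_eq, Nat.add_one_ne_zero,
      not_false_eq_true, if_true, Nat.add_sub_cancel]
    congr 1
    ext i; fin_cases i <;> simp

lemma substX_monomial (c : K) (d : Fin 2 →₀ ℕ) (r : K) :
    substX c (monomial d r) = monomial d (c ^ d 0 * r) := by
  simp only [substX, monomial_eq, Finsupp.prod_fintype _ _ (fun _ => pow_zero _),
    Fin.prod_univ_two]
  simp [mul_pow, C_mul]
  ring

lemma coeff_substX (c : K) (p : MvPolynomial (Fin 2) K) (j l : ℕ) :
    coeff (expXY j l) (substX c p) = c ^ j * coeff (expXY j l) p := by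
  induction p using MvPolynomial.induction_on' with
  | monomial d r =>
    rw [substX_monomial, coeff_monomial, coeff_monomial]
    split_ifs with h
    · subst h; simp
    · simp
  | add p p' hp hp' => simp only [substX, map_add, coeff_add] at *; rw [hp, hp', mul_add]

def appellCoeff (q : K) (a : ℕ → K) (n j l : ℕ) : K :=
  if j + l ≤ n then
    qFact q n * (a (n - j - l) / qFact q (n - j - l)) / qFact q j *
      (q ^ (l * (l - 1) / 2) / qFact q l)
  else 0

lemma coeff_appell (q : K) (a : ℕ → K) (n j l : ℕ) :
    coeff (expXY j l) (appell q a n) = appellCoeff q a n j l := by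
  simp only [appell, ← expXY.eq_1, coeff_sum, coeff_monomial, appellCoeff, expXY_inj]
  split_ifs with h
  · rw [sum_eq_single (n - j - l), sum_eq_single j,
      show n - (n - j - l) - j = l by omega, if_pos ⟨rfl, rfl⟩]
    · field_simp
    · exact fun j' _ hj' => if_neg fun hc => hj' hc.1
    · simp only [mem_range]; omega
    · intro i _ hi
      refine sum_eq_zero fun j' hj' => if_neg fun hc => ?_
      rw [mem_range] at hj'
      omega
    · simp only [mem_range]; omega
  · refine sum_eq_zero fun i hi => sum_eq_zero fun j' hj' => ?_
    simp only [mem_range] at hi hj'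
    exact if_neg fun hc => by omega

lemma coeff_appell_of_lt (q : K) (a : ℕ → K) {n j l : ℕ} (h : n < j + l) :
    coeff (expXY j l) (appell q a n) = 0 := by
  rw [coeff_appell, appellCoeff, if_neg (by omega)]

end Coeff

lemma coeff_C_mul_C_add_C_mul_X_mul {σ R : Type*} [CommSemiring R] (d : σ →₀ ℕ) (i : σ)
    (r s t : R) (p : MvPolynomial σ R) :
    coeff d (C r * (C s + C t * X i) * p) = r * s * coeff d p + r * t * coeff d (X i * p) := by
  simp only [mul_add, add_mul, mul_assoc, coeff_add, coeff_C_mul]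

section Recurrence
variable {K : Type*} [Field K] {q : K} (hq : ∀ n : ℕ, 1 ≤ n → qInt q n ≠ 0) (a : ℕ → K)
include hq

lemma qInt_mul_coeff_X_zero_mul_appell (n j l : ℕ) :
    qInt q n * coeff (expXY j l) (X 0 * appell q a (n - 1)) =
      qInt q j * coeff (expXY j l) (appell q a n) := by
  rw [coeff_X_zero_mul]
  rcases j with _ | j
  · simp
  rcases n with _ | n
  · simp [coeff_appell_of_lt]
  simp only [Nat.add_one_ne_zero, if_false, Nat.add_sub_cancel, coeff_appell, appellCoeff,
    show n + 1 - (j + 1) - l = n - j - l by omega]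
  split_ifs with h h' h'
  · rw [qFact_succ q n, qFact_succ q j]
    field_simp [hq (j + 1) j.succ_pos]
  · omega
  · omega
  · simp

lemma qChoose_mul_pow_mul_appellCoeff (k r j l : ℕ) :
    qChoose q (k + r + j + l) k * q ^ (j + l + r) * appellCoeff q a (j + l + r) j l =
      q ^ (j + l) * (qFact q (k + r + j + l) / qFact q j * (q ^ (l * (l - 1) / 2) / qFact q l)) *
        (1 / qFact q k * (a r * q ^ r / qFact q r)) := by
  rw [qChoose, appellCoeff, if_pos (by omega), show k + r + j + l - k = j + l + r by omega,
    show j + l + r - j - l = r by omega, pow_add]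
  have := qFact_ne_zero hq (j + l + r)
  field_simp

lemma sum_qChoose_mul_appellCoeff {γ h : ℕ → K} (hγ0 : γ 0 = 0)
    (H : PowerSeries.mk h = PowerSeries.mk (fun k => γ k / qFact q k) *
      PowerSeries.mk (fun m => a m * q ^ m / qFact q m)) (n j l : ℕ) :
    ∑ k ∈ Icc 1 n, qChoose q n k * q ^ (n - k) * γ k * appellCoeff q a (n - k) j l =
      if j + l ≤ n then
        q ^ (j + l) * (qFact q n / qFact q j * (q ^ (l * (l - 1) / 2) / qFact q l)) * h (n - j - l)
      else 0 := by
  split_ifs with hjl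
  swap
  · exact sum_eq_zero fun k _ => by rw [appellCoeff, if_neg (by omega), mul_zero]
  obtain ⟨m, rfl⟩ : ∃ m, n = m + j + l := ⟨n - j - l, by omega⟩
  have hvanish : ∀ k, m < k → k ≤ m + j + l →
      qChoose q (m + j + l) k * q ^ (m + j + l - k) * γ k * appellCoeff q a (m + j + l - k) j l = 0 :=
    fun k hk _ => by rw [appellCoeff, if_neg (by omega), mul_zero]
  rw [sum_Icc_one_eq_sum_range_of_eq_zero (by omega) (by simp [hγ0]) hvanish,
    ← PowerSeries.sum_range_eq_of_mk_eq_mk_mul_mk H, mul_sum, show m + j + l - j - l = m by omega]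
  refine sum_congr rfl fun k hk => ?_
  obtain ⟨r, rfl⟩ : ∃ r, m = k + r := ⟨m - k, by simp only [mem_range] at hk; omega⟩
  rw [show k + r + j + l - k = j + l + r by omega, Nat.add_sub_cancel_left, mul_right_comm _ (γ k),
    qChoose_mul_pow_mul_appellCoeff hq]
  ring

lemma sum_alpha_mul_coeff_appell {α : ℕ → K} (hα0 : α 0 = 0)
    (hα : PowerSeries.mk (fun m => qInt q m * (a m / qFact q m)) =
      PowerSeries.mk (fun k => α k / qFact q k) *
        PowerSeries.mk (fun m => a m * q ^ m / qFact q m)) (n j l : ℕ) :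
    ∑ k ∈ Icc 1 n, qChoose q n k * q ^ (n - k) * α k * coeff (expXY j l) (appell q a (n - k)) =
      q ^ (j + l) * qInt q (n - j - l) * coeff (expXY j l) (appell q a n) := by
  simp only [coeff_appell]
  rw [sum_qChoose_mul_appellCoeff hq a hα0 hα, appellCoeff]
  split_ifs
  · ring
  · simp

lemma sum_beta_mul_coeff_X_one_mul_appell {β : ℕ → K}
    (hβ : PowerSeries.mk (fun n => a n / qFact q n) =
      PowerSeries.mk (fun n => β n / qFact q n) *
        PowerSeries.mk (fun n => a n * q ^ n / qFact q n)) (n j l : ℕ) :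
    ∑ k ∈ Icc 1 n, qChoose q n k * q ^ (n - k) * (qInt q k * β (k - 1)) *
        coeff (expXY j l) (X 1 * appell q a (n - k)) =
      q ^ j * qInt q l * coeff (expXY j l) (appell q a n) := by
  simp only [coeff_X_one_mul]
  rcases l with _ | l
  · simp
  simp only [Nat.add_one_ne_zero, if_false, Nat.add_sub_cancel, coeff_appell]
  have H : PowerSeries.mk (fun m => if m = 0 then 0 else a (m - 1) / qFact q (m - 1)) =
      PowerSeries.mk (fun k => qInt q k * β (k - 1) / qFact q k) *
        PowerSeries.mk (fun m => a m * q ^ m / qFact q m) := by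
    rw [← PowerSeries.X_mul_mk (fun m => a m / qFact q m), hβ, ← mul_assoc, PowerSeries.X_mul_mk]
    congr 2
    funext k
    rcases k with _ | k
    · simp
    · simp [mul_div_assoc, qInt_mul_div_qFact_succ hq]
  rw [sum_qChoose_mul_appellCoeff hq a (by simp) H, appellCoeff]
  split_ifs with h1 h2 h3 h3
  · omega
  · simp
  · rw [Nat.triangle_succ, qFact_succ q l, show n - j - l - 1 = n - j - (l + 1) by omega]
    have := hq (l + 1) l.succ_pos
    field_simp
    ring
  · omega
  · omega
  · simp

end Recurrence

theorem appell_recurrence_general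
    {K : Type*} [Field K] (q : K)
    (hq : ∀ n : ℕ, 1 ≤ n → qInt q n ≠ 0)
    (a : ℕ → K) (ha0 : a 0 ≠ 0)
    (α β : ℕ → K)
    (hα : PowerSeries.mk (fun n => if n = 0 then (0 : K) else a n / qFact q (n - 1)) =
      PowerSeries.mk (fun n => α n / qFact q n) *
        PowerSeries.mk (fun n => a n * q ^ n / qFact q n))
    (hβ : PowerSeries.mk (fun n => a n / qFact q n) =
      PowerSeries.mk (fun n => β n / qFact q n) *
        PowerSeries.mk (fun n => a n * q ^ n / qFact q n))
    (n : ℕ) :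
    C (qInt q n) * substX q (appell q a n) =
      (∑ k ∈ Finset.Icc 1 n, C (qChoose q n k * q ^ (n - k)) *
        (C (α k) + C (qInt q k * β (k - 1)) * X 1) * appell q a (n - k)) +
      C (qInt q n * q ^ n) * X 0 * appell q a (n - 1) := by
  have hα0 : α 0 = 0 := by
    simpa [ha0] using PowerSeries.sum_range_eq_of_mk_eq_mk_mul_mk hα 0
  rw [mk_div_qFact_pred_eq_mk_qInt_mul hq] at hα
  ext d
  obtain ⟨j, l, rfl⟩ : ∃ j l, d = expXY j l := ⟨d 0, d 1, (expXY_eta d).symm⟩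
  have hx := qInt_mul_coeff_X_zero_mul_appell hq a n j l
  rw [coeff_C_mul, coeff_substX, coeff_add, coeff_sum,
    sum_congr rfl fun k _ => coeff_C_mul_C_add_C_mul_X_mul _ _ _ _ _ _, sum_add_distrib,
    sum_alpha_mul_coeff_appell hq a hα0 hα, sum_beta_mul_coeff_X_one_mul_appell hq a hβ,
    mul_assoc (C _) (X 0), coeff_C_mul]
  rcases le_or_gt (j + l) n with h | h
  · obtain ⟨m, rfl⟩ : ∃ m, n = m + j + l := ⟨n - j - l, by omega⟩
    have hsplit : qInt q (m + j + l) = qInt q l + q ^ l * (qInt q m + q ^ m * qInt q j) := by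
      rw [show m + j + l = l + (m + j) by omega, qInt_add, qInt_add]
    rw [show m + j + l - j - l = m by omega]
    linear_combination (q ^ j * coeff (expXY j l) (appell q a (m + j + l))) * hsplit -
      q ^ (m + j + l) * hx
  · rw [coeff_appell_of_lt q a h] at hx ⊢
    linear_combination -(q ^ n) * hx

/-- Recurrence relation for 2D `q`-Appell polynomials:
`[n]_q A_{n,q}(qx,y) = Σ_{k=1}^n [n choose k]_q q^(n-k) (α_k + [k]_q β_(k-1) y) A_{n-k,q}(x,y)
  + [n]_q q^n x A_{n-1,q}(x,y)`. -/
theorem appell_recurrence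
    {K : Type*} [Field K] [CharZero K] (q : K) (hq0 : q ≠ 0) (hq1 : q ≠ 1)
    (hq : ∀ n : ℕ, 1 ≤ n → qInt q n ≠ 0)
    (a : ℕ → K) (ha0 : a 0 ≠ 0)
    (α β : ℕ → K)
    (hα : PowerSeries.mk (fun n => if n = 0 then (0 : K) else a n / qFact q (n - 1)) =
      PowerSeries.mk (fun n => α n / qFact q n) *
        PowerSeries.mk (fun n => a n * q ^ n / qFact q n))
    (hβ : PowerSeries.mk (fun n => a n / qFact q n) =
      PowerSeries.mk (fun n => β n / qFact q n) *
        PowerSeries.mk (fun n => a n * q ^ n / qFact q n))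
    (n : ℕ) (hn : 1 ≤ n) :
    C (qInt q n) * substX q (appell q a n) =
      (∑ k ∈ Finset.Icc 1 n, C (qChoose q n k * q ^ (n - k)) *
        (C (α k) + C (qInt q k * β (k - 1)) * X 1) * appell q a (n - k)) +
      C (qInt q n * q ^ n) * X 0 * appell q a (n - 1) :=
  appell_recurrence_general q hq a ha0 α β hα hβ n
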